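/- Let Q(τ) be as in the linearized bubble model, and write a root as τ = ξ + iη with η ≠ 0. Then separating the imaginary part of Q(ξ+iη) = 0 yields ((4π/(3γ)) + (8(γ-1)/(πγ)) ∑_j π⁴κ̄²j²/((π²κ̄j²+ξ)²+η²))(2ρ_lR_*ξ + 4μ_l/R_*) + (8(γ-1)/(πγ)) ∑_j π²κ̄/((π²κ̄j²+ξ)²+η²) · (ρ_lR_*(ξ²+η²) + 2σ/R_*²) = 0, and consequently 2ρ_lR_*ξ + 4μ_l/R_* < 0, i.e. ξ < -2μ_l/(ρ_lR_*²). -/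

import Mathlib

open Real Complex

/-- The resolvent denominator `Q(τ)` of the linearized bubble dynamics
(simplified form). -/
noncomputable def Qsimp (κ γ Rg Tinf ρl Rs μl σ ρs : ℝ) (τ : ℂ) : ℂ :=
  (1 / ((Rg : ℂ) * (Tinf : ℂ))) *
    ((4 * (π : ℂ) / (3 * (γ : ℂ))) +
      (8 * ((γ : ℂ) - 1) / ((π : ℂ) * (γ : ℂ))) *
        ∑' j : ℕ, (π : ℂ) ^ 2 * (κ : ℂ) / ((π : ℂ) ^ 2 * (κ : ℂ) * ((j : ℂ) + 1) ^ 2 + τ)) *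
    ((ρl : ℂ) * (Rs : ℂ) * τ ^ 2 + (4 * (μl : ℂ) / (Rs : ℂ)) * τ - 2 * (σ : ℂ) / (Rs : ℂ) ^ 2)
  + 4 * (π : ℂ) * (ρs : ℂ) / (Rs : ℂ)

/-!
With `c = π²κ` and `τ = ξ + iη`, the `j`-th term of the series in `Q` is `c / (c(j+1)² + τ)`,
whose real and imaginary parts are `c(c(j+1)² + ξ)/D_j` and `-cη/D_j`, where
`D_j = (c(j+1)² + ξ)² + η²`. Taking imaginary parts in `Q(τ) = 0`, the real constant
`4πρ_*/R_*` drops out and a factor `η` splits off, leaving `K X + L = 0` with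
`X = 2ρ_lR_*ξ + 4μ_l/R_*`, `K > 0`, and `L > 0` because `η ≠ 0`; hence `X < 0`.
-/

open Filter

section Series

variable {c : ℝ}

lemma ofReal_div_re (r : ℝ) (w : ℂ) : ((r : ℂ) / w).re = r * w.re / (w.re ^ 2 + w.im ^ 2) := by
  simp [Complex.div_re, Complex.normSq_apply, sq, mul_div_assoc]

lemma ofReal_div_im (r : ℝ) (w : ℂ) : ((r : ℂ) / w).im = -(r * w.im) / (w.re ^ 2 + w.im ^ 2) := by
  simp [Complex.div_im, Complex.normSq_apply, sq, neg_div]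

lemma mul_sq_add_re (j : ℕ) (z : ℂ) :
    ((c : ℂ) * ((j : ℂ) + 1) ^ 2 + z).re = c * ((j : ℝ) + 1) ^ 2 + z.re := by
  simp [sq]

lemma mul_sq_add_im (j : ℕ) (z : ℂ) : ((c : ℂ) * ((j : ℂ) + 1) ^ 2 + z).im = z.im := by
  simp [sq]

lemma eventually_half_le_norm_mul_sq_add (hc : 0 < c) (z : ℂ) :
    ∀ᶠ j : ℕ in atTop, c * ((j : ℝ) + 1) ^ 2 / 2 ≤ ‖(c : ℂ) * ((j : ℂ) + 1) ^ 2 + z‖ := by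
  filter_upwards [tendsto_natCast_atTop_atTop.eventually_ge_atTop (2 * ‖z‖ / c)] with j hj
  have hx : ‖(c : ℂ) * ((j : ℂ) + 1) ^ 2‖ = c * ((j : ℝ) + 1) ^ 2 := by
    rw [show (c : ℂ) * ((j : ℂ) + 1) ^ 2 = ((c * ((j : ℝ) + 1) ^ 2 : ℝ) : ℂ) by push_cast; ring,
      Complex.norm_real, Real.norm_of_nonneg (by positivity)]
  have hz : 2 * ‖z‖ ≤ c * ((j : ℝ) + 1) ^ 2 := by
    rw [div_le_iff₀ hc] at hj
    nlinarith [sq_nonneg (j : ℝ), (Nat.cast_nonneg j : (0 : ℝ) ≤ j)]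
  calc c * ((j : ℝ) + 1) ^ 2 / 2 ≤ ‖(c : ℂ) * ((j : ℂ) + 1) ^ 2‖ - ‖z‖ := by rw [hx]; linarith
    _ ≤ ‖(c : ℂ) * ((j : ℂ) + 1) ^ 2 + z‖ := by
      simpa only [norm_neg, sub_neg_eq_add] using
        norm_sub_norm_le ((c : ℂ) * ((j : ℂ) + 1) ^ 2) (-z)

lemma summable_div_mul_sq_add (hc : 0 < c) (z : ℂ) :
    Summable fun j : ℕ => (c : ℂ) / (c * ((j : ℂ) + 1) ^ 2 + z) := by
  have hsq : Summable fun j : ℕ => 2 / ((j : ℝ) + 1) ^ 2 := by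
    have := (summable_nat_add_iff 1).mpr (Real.summable_one_div_nat_pow.mpr one_lt_two)
    simpa [div_eq_mul_inv] using this.mul_left 2
  refine .of_norm_bounded_eventually_nat hsq ?_
  filter_upwards [eventually_half_le_norm_mul_sq_add hc z] with j hj
  calc ‖(c : ℂ) / (c * ((j : ℂ) + 1) ^ 2 + z)‖ = c / ‖(c : ℂ) * ((j : ℂ) + 1) ^ 2 + z‖ := by
        rw [norm_div, Complex.norm_real, Real.norm_of_nonneg hc.le]
    _ ≤ c / (c * ((j : ℝ) + 1) ^ 2 / 2) := div_le_div_of_nonneg_left hc.le (by positivity) hj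
    _ = 2 / ((j : ℝ) + 1) ^ 2 := by field_simp

variable (ξ η : ℝ)

lemma div_mul_sq_add_mk_re (j : ℕ) :
    ((c : ℂ) / (c * ((j : ℂ) + 1) ^ 2 + Complex.mk ξ η)).re =
      c ^ 2 * ((j : ℝ) + 1) ^ 2 / ((c * ((j : ℝ) + 1) ^ 2 + ξ) ^ 2 + η ^ 2)
        + ξ * (c / ((c * ((j : ℝ) + 1) ^ 2 + ξ) ^ 2 + η ^ 2)) := by
  rw [ofReal_div_re, mul_sq_add_re, mul_sq_add_im]
  ring

lemma div_mul_sq_add_mk_im (j : ℕ) :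
    ((c : ℂ) / (c * ((j : ℂ) + 1) ^ 2 + Complex.mk ξ η)).im =
      -η * (c / ((c * ((j : ℝ) + 1) ^ 2 + ξ) ^ 2 + η ^ 2)) := by
  rw [ofReal_div_im, mul_sq_add_re, mul_sq_add_im]
  ring

lemma im_tsum_div_mul_sq_add (hc : 0 < c) :
    (∑' j : ℕ, (c : ℂ) / (c * ((j : ℂ) + 1) ^ 2 + Complex.mk ξ η)).im =
      -η * ∑' j : ℕ, c / ((c * ((j : ℝ) + 1) ^ 2 + ξ) ^ 2 + η ^ 2) := by
  simp only [Complex.im_tsum (summable_div_mul_sq_add hc _), div_mul_sq_add_mk_im, tsum_mul_left]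

variable {η}

lemma summable_div_sq_add_sq (hc : 0 < c) (hη : η ≠ 0) :
    Summable fun j : ℕ => c / ((c * ((j : ℝ) + 1) ^ 2 + ξ) ^ 2 + η ^ 2) := by
  refine (((summable_div_mul_sq_add hc (Complex.mk ξ η)).mapL Complex.imCLM).mul_left
    (-η⁻¹)).congr fun j => ?_
  simp only [Complex.imCLM_apply, div_mul_sq_add_mk_im]
  field_simp

lemma re_tsum_div_mul_sq_add (hc : 0 < c) (hη : η ≠ 0) :
    (∑' j : ℕ, (c : ℂ) / (c * ((j : ℂ) + 1) ^ 2 + Complex.mk ξ η)).re =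
      ∑' j : ℕ, c ^ 2 * ((j : ℝ) + 1) ^ 2 / ((c * ((j : ℝ) + 1) ^ 2 + ξ) ^ 2 + η ^ 2)
        + ξ * ∑' j : ℕ, c / ((c * ((j : ℝ) + 1) ^ 2 + ξ) ^ 2 + η ^ 2) := by
  have hB := (summable_div_sq_add_sq ξ hc hη).mul_left ξ
  have hA : Summable fun j : ℕ =>
      c ^ 2 * ((j : ℝ) + 1) ^ 2 / ((c * ((j : ℝ) + 1) ^ 2 + ξ) ^ 2 + η ^ 2) :=
    (((summable_div_mul_sq_add hc (Complex.mk ξ η)).mapL Complex.reCLM).sub hB).congr fun j => by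
      simp [div_mul_sq_add_mk_re]
  rw [Complex.re_tsum (summable_div_mul_sq_add hc _), ← tsum_mul_left, ← hA.tsum_add hB]
  simp only [div_mul_sq_add_mk_re]

end Series

lemma im_Qsimp (κ γ Rg Tinf ρl Rs μl σ ρs ξ η : ℝ) :
    (Qsimp κ γ Rg Tinf ρl Rs μl σ ρs (Complex.mk ξ η)).im =
      1 / (Rg * Tinf) *
        ((4 * π / (3 * γ) + 8 * (γ - 1) / (π * γ) *
            (∑' j : ℕ, ((π ^ 2 * κ : ℝ) : ℂ) /
              ((π ^ 2 * κ : ℝ) * ((j : ℂ) + 1) ^ 2 + Complex.mk ξ η)).re) *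
            (η * (2 * ρl * Rs * ξ + 4 * μl / Rs))
          + 8 * (γ - 1) / (π * γ) *
            (∑' j : ℕ, ((π ^ 2 * κ : ℝ) : ℂ) /
              ((π ^ 2 * κ : ℝ) * ((j : ℂ) + 1) ^ 2 + Complex.mk ξ η)).im *
            (ρl * Rs * (ξ ^ 2 - η ^ 2) + 4 * μl / Rs * ξ - 2 * σ / Rs ^ 2)) := by
  set S := ∑' j : ℕ, ((π ^ 2 * κ : ℝ) : ℂ) /
    ((π ^ 2 * κ : ℝ) * ((j : ℂ) + 1) ^ 2 + Complex.mk ξ η)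
  have hQ : Qsimp κ γ Rg Tinf ρl Rs μl σ ρs (Complex.mk ξ η) =
      ((1 / (Rg * Tinf) : ℝ) : ℂ) * ((4 * π / (3 * γ) : ℝ) + ((8 * (γ - 1) / (π * γ) : ℝ)) * S) *
        ((ρl * Rs : ℝ) * Complex.mk ξ η ^ 2 + (4 * μl / Rs : ℝ) * Complex.mk ξ η
          - (2 * σ / Rs ^ 2 : ℝ)) + (4 * π * ρs / Rs : ℝ) := by
    simp only [Qsimp, S]
    push_cast
    ring
  rw [hQ]
  simp only [Complex.add_im, Complex.add_re, Complex.sub_im, Complex.sub_re, Complex.mul_im,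
    Complex.mul_re, Complex.ofReal_re, Complex.ofReal_im, sq]
  ring

theorem Q_root_imaginary_part_general
    (κ γ Rg Tinf ρl Rs μl σ ρs : ℝ)
    (hκ : 0 < κ) (hγ : 1 < γ) (hRg : 0 < Rg) (hT : 0 < Tinf)
    (hρl : 0 < ρl) (hRs : 0 < Rs) (hσ : 0 ≤ σ)
    (ξ η : ℝ) (hη : η ≠ 0)
    (hroot : Qsimp κ γ Rg Tinf ρl Rs μl σ ρs (Complex.mk ξ η) = 0) :
    ((4 * π / (3 * γ)) +
        (8 * (γ - 1) / (π * γ)) *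
          ∑' j : ℕ, π ^ 4 * κ ^ 2 * ((j : ℝ) + 1) ^ 2 /
            ((π ^ 2 * κ * ((j : ℝ) + 1) ^ 2 + ξ) ^ 2 + η ^ 2)) *
        (2 * ρl * Rs * ξ + 4 * μl / Rs)
      + (8 * (γ - 1) / (π * γ)) *
          (∑' j : ℕ, π ^ 2 * κ /
            ((π ^ 2 * κ * ((j : ℝ) + 1) ^ 2 + ξ) ^ 2 + η ^ 2)) *
          (ρl * Rs * (ξ ^ 2 + η ^ 2) + 2 * σ / Rs ^ 2) = 0
    ∧ 2 * ρl * Rs * ξ + 4 * μl / Rs < 0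
    ∧ ξ < -(2 * μl / (ρl * Rs ^ 2)) := by
  have hc : 0 < π ^ 2 * κ := by positivity
  have him := congrArg Complex.im hroot
  rw [im_Qsimp, re_tsum_div_mul_sq_add ξ hc hη, im_tsum_div_mul_sq_add ξ η hc,
    Complex.zero_im] at him
  simp only [show π ^ 4 * κ ^ 2 = (π ^ 2 * κ) ^ 2 by ring]
  set TA := ∑' j : ℕ, (π ^ 2 * κ) ^ 2 * ((j : ℝ) + 1) ^ 2 /
    ((π ^ 2 * κ * ((j : ℝ) + 1) ^ 2 + ξ) ^ 2 + η ^ 2)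
  set TB := ∑' j : ℕ, π ^ 2 * κ / ((π ^ 2 * κ * ((j : ℝ) + 1) ^ 2 + ξ) ^ 2 + η ^ 2)
  set X := 2 * ρl * Rs * ξ + 4 * μl / Rs
  set P := ρl * Rs * (ξ ^ 2 + η ^ 2) + 2 * σ / Rs ^ 2
  have hkey : (4 * π / (3 * γ) + 8 * (γ - 1) / (π * γ) * TA) * X
      + 8 * (γ - 1) / (π * γ) * TB * P = 0 := by
    have h : 1 / (Rg * Tinf) * η *
        ((4 * π / (3 * γ) + 8 * (γ - 1) / (π * γ) * TA) * X
          + 8 * (γ - 1) / (π * γ) * TB * P) = 0 := by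
      linear_combination him
    simpa [hRg.ne', hT.ne', hη] using h
  have hTA : 0 ≤ TA := tsum_nonneg fun j => by positivity
  have hTB : 0 < TB := (summable_div_sq_add_sq ξ hc hη).tsum_pos (fun j => by positivity) 0
    (by positivity)
  have hγ1 : 0 < γ - 1 := by linarith
  have hX : X < 0 := by
    have hK : 0 < 4 * π / (3 * γ) + 8 * (γ - 1) / (π * γ) * TA := by positivity
    have hL : 0 < 8 * (γ - 1) / (π * γ) * TB * P := by positivity
    nlinarith
  refine ⟨hkey, hX, ?_⟩
  have hξ : -(2 * μl / (ρl * Rs ^ 2)) - ξ = -X / (2 * ρl * Rs) := by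
    simp only [X]
    field_simp
    ring
  linarith [div_pos (neg_pos.mpr hX) (by positivity : 0 < 2 * ρl * Rs)]

/-- If `τ = ξ + iη` with `η ≠ 0` is a root of `Q`, then the vanishing of the
imaginary part yields the stated real identity, and consequently
`2ρ_lR_*ξ + 4μ_l/R_* < 0`, i.e. `ξ < -2μ_l/(ρ_lR_*²)`. -/
theorem Q_root_imaginary_part
    (κ γ Rg Tinf ρl Rs μl σ ρs : ℝ)
    (hκ : 0 < κ) (hγ : 1 < γ) (hRg : 0 < Rg) (hT : 0 < Tinf)
    (hρl : 0 < ρl) (hRs : 0 < Rs) (hμl : 0 < μl) (hσ : 0 ≤ σ) (hρs : 0 < ρs)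
    (ξ η : ℝ) (hη : η ≠ 0)
    (hroot : Qsimp κ γ Rg Tinf ρl Rs μl σ ρs (Complex.mk ξ η) = 0) :
    ((4 * π / (3 * γ)) +
        (8 * (γ - 1) / (π * γ)) *
          ∑' j : ℕ, π ^ 4 * κ ^ 2 * ((j : ℝ) + 1) ^ 2 /
            ((π ^ 2 * κ * ((j : ℝ) + 1) ^ 2 + ξ) ^ 2 + η ^ 2)) *
        (2 * ρl * Rs * ξ + 4 * μl / Rs)
      + (8 * (γ - 1) / (π * γ)) *
          (∑' j : ℕ, π ^ 2 * κ /
            ((π ^ 2 * κ * ((j : ℝ) + 1) ^ 2 + ξ) ^ 2 + η ^ 2)) *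
          (ρl * Rs * (ξ ^ 2 + η ^ 2) + 2 * σ / Rs ^ 2) = 0
    ∧ 2 * ρl * Rs * ξ + 4 * μl / Rs < 0
    ∧ ξ < -(2 * μl / (ρl * Rs ^ 2)) :=
  Q_root_imaginary_part_general κ γ Rg Tinf ρl Rs μl σ ρs hκ hγ hRg hT hρl hRs hσ ξ η hη hroot
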